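/- Let n ≥ 2 be an integer and let f : ℝ^{1+n} → ℂ be continuous and compactly supported. Then for every (t,x) ∈ ℝ × ℝ^n, ∫_{S^{n-1}} Lf(x − tθ, θ) dθ = ∫_{ℝ^n} ( f(t + ‖y‖, x + y) + f(t − ‖y‖, x + y) ) · ‖y‖^{1−n} dy, where dθ is the standard surface measure on S^{n-1}. (The left-hand side is the normal operator N f(t,x) = L*Lf(t,x); the right-hand side exhibits its Schwartz kernel (δ(t−t'−|x−x'|)+δ(t−t'+|x−x'|))/|x−x'|^{n−1}.) -/

import Mathlib

/-!
Recentring the ray through `(t, x)` in direction `θ` gives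
`Lf(x − tθ, θ) = ∫_ℝ f(t + u, x + uθ) du = ∫_{r > 0} f(t + r, x + rθ) + f(t − r, x − rθ) dr`.
Integrating over `θ` and reading `r^{n−1} dr dθ = dy` in polar coordinates `y = rθ` turns the
sphere integral into an integral over `ℝ^n` with weight `‖y‖^{1−n}`; the reflection `y ↦ −y`
then moves the backward term to `x + y`. All integrals converge because `‖y‖^{1−n}` is locally
integrable on `ℝ^n` and the integrands are continuous with compact support.
-/

open MeasureTheory Metric
open scoped Real

/-- The light ray transform on Minkowski space `ℝ^{1+n}`. -/
noncomputable def lightRay {n : ℕ} (f : ℝ × EuclideanSpace ℝ (Fin n) → ℂ)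
    (y : EuclideanSpace ℝ (Fin n)) (θ : sphere (0 : EuclideanSpace ℝ (Fin n)) 1) : ℂ :=
  ∫ s : ℝ, f (s, y + s • (θ : EuclideanSpace ℝ (Fin n)))

/-- The standard surface measure on the unit sphere of `ℝ^n`. -/
noncomputable def sphereMeasure (n : ℕ) :
    Measure (sphere (0 : EuclideanSpace ℝ (Fin n)) 1) :=
  (volume : Measure (EuclideanSpace ℝ (Fin n))).toSphere

open Set Function

theorem MeasureTheory.Measure.integral_volumeIoiPow {F : Type*} [NormedAddCommGroup F]
    [NormedSpace ℝ F] (n : ℕ) (g : ℝ → F) :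
    ∫ r : Ioi (0 : ℝ), g r ∂volumeIoiPow n = ∫ r in Ioi (0 : ℝ), r ^ n • g r := by
  simp only [Measure.volumeIoiPow, ENNReal.ofReal]
  rw [integral_withDensity_eq_integral_smul (measurable_subtype_coe.pow_const _).real_toNNReal,
    integral_subtype_comap measurableSet_Ioi fun r ↦ (r ^ n).toNNReal • g r]
  refine setIntegral_congr_fun measurableSet_Ioi fun r (hr : 0 < r) ↦ ?_
  rw [NNReal.smul_def, Real.coe_toNNReal _ (pow_nonneg hr.le n)]

theorem integral_eq_integral_Ioi_add_comp_neg {G : Type*} [NormedAddCommGroup G]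
    [NormedSpace ℝ G] {g : ℝ → G} (hg : Integrable g) :
    ∫ u, g u = ∫ r in Ioi (0 : ℝ), (g r + g (-r)) := by
  rw [integral_add hg.integrableOn hg.comp_neg.integrableOn, integral_comp_neg_Ioi, neg_zero,
    add_comm, intervalIntegral.integral_Iic_add_Ioi hg.integrableOn hg.integrableOn]

section Polar

variable {E F : Type*} [NormedAddCommGroup E] [NormedSpace ℝ E] [FiniteDimensional ℝ E]
  [MeasurableSpace E] [BorelSpace E] [Nontrivial E] (μ : Measure E) [μ.IsAddHaarMeasure]
  [NormedAddCommGroup F] [NormedSpace ℝ F]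

theorem integral_eq_integral_sphere_integral_Ioi {g : E → F} (hg : Integrable g μ) :
    ∫ y, g y ∂μ = ∫ θ : sphere (0 : E) 1, (∫ r in Ioi (0 : ℝ),
      r ^ (Module.finrank ℝ E - 1) • g (r • (θ : E))) ∂μ.toSphere := by
  have hpolar := μ.measurePreserving_homeomorphUnitSphereProd
  set gp : sphere (0 : E) 1 × Ioi (0 : ℝ) → F := fun p ↦ g ((p.2 : ℝ) • (p.1 : E))
  have hgp : gp ∘ homeomorphUnitSphereProd E = g ∘ Subtype.val := by
    funext y
    simp [gp, smul_inv_smul₀ (norm_ne_zero_iff.2 y.2)]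
  have hg' : Integrable (g ∘ Subtype.val) (μ.comap ((↑) : ({0}ᶜ : Set E) → E)) := by
    rw [← integrableOn_iff_comap_subtypeVal (measurableSet_singleton 0).compl,
      IntegrableOn, restrict_compl_singleton]
    exact hg
  have hprod : Integrable gp (μ.toSphere.prod (Measure.volumeIoiPow _)) :=
    (hpolar.integrable_comp_emb (Homeomorph.measurableEmbedding _)).1 (hgp ▸ hg')
  calc ∫ y, g y ∂μ = ∫ y : ({0}ᶜ : Set E), g y ∂(μ.comap (↑)) := by
        rw [integral_subtype_comap (measurableSet_singleton 0).compl, restrict_compl_singleton]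
    _ = ∫ p, gp p ∂(μ.toSphere.prod (Measure.volumeIoiPow _)) := by
        rw [← hpolar.integral_comp (Homeomorph.measurableEmbedding _)]
        exact congrArg (integral _) hgp.symm
    _ = _ := by
        rw [integral_prod _ hprod]
        exact integral_congr_ae <| .of_forall fun θ ↦
          Measure.integral_volumeIoiPow _ fun r ↦ g (r • (θ : E))

theorem integral_norm_rpow_smul_eq_integral_sphere {h : E → F}
    (hh : Integrable (fun y ↦ ‖y‖ ^ (1 - Module.finrank ℝ E : ℝ) • h y) μ) :
    ∫ y, ‖y‖ ^ (1 - Module.finrank ℝ E : ℝ) • h y ∂μ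
      = ∫ θ : sphere (0 : E) 1, (∫ r in Ioi (0 : ℝ), h (r • (θ : E))) ∂μ.toSphere := by
  rw [integral_eq_integral_sphere_integral_Ioi μ hh]
  refine integral_congr_ae <| .of_forall fun θ ↦
    setIntegral_congr_fun measurableSet_Ioi fun r (hr : 0 < r) ↦ ?_
  have hexp : ((Module.finrank ℝ E - 1 : ℕ) : ℝ) + (1 - Module.finrank ℝ E) = 0 := by
    rw [Nat.cast_pred Module.finrank_pos]
    ring
  rw [norm_smul, norm_eq_of_mem_sphere θ, mul_one, Real.norm_of_nonneg hr.le, smul_smul,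
    ← Real.rpow_natCast, ← Real.rpow_add hr, hexp, Real.rpow_zero, one_smul]

theorem integral_sphere_integral_Ioi_add_comp_neg [μ.IsNegInvariant] {φ ψ : E → F}
    (hφ : Integrable (fun y ↦ ‖y‖ ^ (1 - Module.finrank ℝ E : ℝ) • φ y) μ)
    (hψ : Integrable (fun y ↦ ‖y‖ ^ (1 - Module.finrank ℝ E : ℝ) • ψ y) μ) :
    ∫ θ : sphere (0 : E) 1, (∫ r in Ioi (0 : ℝ), (φ (r • (θ : E)) + ψ (-(r • (θ : E)))))
        ∂μ.toSphere
      = ∫ y, ‖y‖ ^ (1 - Module.finrank ℝ E : ℝ) • (φ y + ψ y) ∂μ := by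
  have hψ_neg : Integrable (fun y ↦ ‖y‖ ^ (1 - Module.finrank ℝ E : ℝ) • ψ (-y)) μ := by
    simpa using hψ.comp_neg
  rw [← integral_norm_rpow_smul_eq_integral_sphere μ (h := fun y ↦ φ y + ψ (-y))
    ((hφ.add hψ_neg).congr (.of_forall fun y ↦ (smul_add _ _ _).symm))]
  simp only [smul_add]
  rw [integral_add hφ hψ_neg, integral_add hφ hψ]
  simpa using integral_neg_eq_self (fun y ↦ ‖y‖ ^ (1 - Module.finrank ℝ E : ℝ) • ψ y) μ

theorem locallyIntegrable_norm_rpow {s : ℝ} (hs : -(Module.finrank ℝ E : ℝ) < s) :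
    LocallyIntegrable (fun y : E ↦ ‖y‖ ^ s) μ :=
  locallyIntegrable_of_norm_le_rpow Module.finrank_pos (C := 1) (α := -s) (by linarith)
    (.of_forall fun y ↦ by simp [Real.norm_of_nonneg (Real.rpow_nonneg (norm_nonneg y) s)])
    (measurable_norm.pow_const s).aestronglyMeasurable

theorem integrable_norm_rpow_smul_comp {f : ℝ × E → F} (hf : Continuous f)
    (hsupp : HasCompactSupport f) {τ : E → ℝ} (hτ : Continuous τ) (x : E) {s : ℝ}
    (hs : -(Module.finrank ℝ E : ℝ) < s) :
    Integrable (fun y ↦ ‖y‖ ^ s • f (τ y, x + y)) μ :=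
  (locallyIntegrable_norm_rpow μ hs).integrable_smul_right_of_hasCompactSupport
    (hf.comp (by fun_prop))
    (hsupp.comp_isClosedEmbedding <| LeftInverse.isClosedEmbedding
      (f := fun p : ℝ × E ↦ p.2 - x) (fun y ↦ by simp) (by fun_prop) (by fun_prop))

end Polar

theorem lightRay_sub_smul {n : ℕ} {f : ℝ × EuclideanSpace ℝ (Fin n) → ℂ} (hf : Continuous f)
    (hsupp : HasCompactSupport f) (t : ℝ) (x : EuclideanSpace ℝ (Fin n))
    (θ : sphere (0 : EuclideanSpace ℝ (Fin n)) 1) :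
    lightRay f (x - t • (θ : EuclideanSpace ℝ (Fin n))) θ
      = ∫ r in Ioi (0 : ℝ), (f (t + r, x + r • (θ : EuclideanSpace ℝ (Fin n)))
          + f (t - r, x - r • (θ : EuclideanSpace ℝ (Fin n)))) := by
  have hline : Integrable fun u : ℝ ↦ f (t + u, x + u • (θ : EuclideanSpace ℝ (Fin n))) :=
    (hf.comp (by fun_prop)).integrable_of_hasCompactSupport <|
      hsupp.comp_isClosedEmbedding <| LeftInverse.isClosedEmbedding
        (f := fun p : ℝ × EuclideanSpace ℝ (Fin n) ↦ p.1 - t) (fun u ↦ by simp)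
        (by fun_prop) (by fun_prop)
  have hshift : ∀ u : ℝ, x - t • (θ : EuclideanSpace ℝ (Fin n)) + (t + u) • (θ : _)
      = x + u • (θ : EuclideanSpace ℝ (Fin n)) := fun u ↦ by
    rw [add_smul]
    abel
  rw [lightRay, ← integral_add_left_eq_self _ t]
  simp only [hshift]
  rw [integral_eq_integral_Ioi_add_comp_neg hline]
  simp only [neg_smul, ← sub_eq_add_neg]

/-- The normal operator `N = L*L` of the light ray transform, written as an integral over
the sphere, has the explicit Schwartz kernel
`(δ(t−t'−|x−x'|)+δ(t−t'+|x−x'|))/|x−x'|^{n−1}`. -/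
theorem normal_operator_kernel {n : ℕ} (hn : 2 ≤ n)
    (f : ℝ × EuclideanSpace ℝ (Fin n) → ℂ)
    (hf : Continuous f) (hsupp : HasCompactSupport f)
    (t : ℝ) (x : EuclideanSpace ℝ (Fin n)) :
    (∫ θ : sphere (0 : EuclideanSpace ℝ (Fin n)) 1,
        lightRay f (x - t • (θ : EuclideanSpace ℝ (Fin n))) θ ∂(sphereMeasure n))
      = ∫ y : EuclideanSpace ℝ (Fin n),
          (f (t + ‖y‖, x + y) + f (t - ‖y‖, x + y)) * (‖y‖ ^ ((1 : ℝ) - n) : ℝ) := by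
  have : Nonempty (Fin n) := ⟨⟨0, by omega⟩⟩
  have hdim : (n : ℝ) = Module.finrank ℝ (EuclideanSpace ℝ (Fin n)) := by simp
  have hs : -(Module.finrank ℝ (EuclideanSpace ℝ (Fin n)) : ℝ)
      < 1 - Module.finrank ℝ (EuclideanSpace ℝ (Fin n)) := by linarith
  rw [hdim]
  refine Eq.trans ?_ <| (integral_sphere_integral_Ioi_add_comp_neg volume
    (integrable_norm_rpow_smul_comp volume hf hsupp (τ := (t + ‖·‖)) (by fun_prop) x hs)
    (integrable_norm_rpow_smul_comp volume hf hsupp (τ := (t - ‖·‖)) (by fun_prop) x hs)).trans ?_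
  · refine integral_congr_ae <| .of_forall fun θ ↦ (lightRay_sub_smul hf hsupp t x θ).trans <|
      setIntegral_congr_fun measurableSet_Ioi fun r (hr : 0 < r) ↦ ?_
    simp [norm_smul, norm_eq_of_mem_sphere θ, abs_of_pos hr, sub_eq_add_neg]
  · refine integral_congr_ae <| .of_forall fun y ↦ ?_
    simp only [Complex.real_smul]
    ring
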